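/- Let T(x) = cone{z − x : ‖Ωz‖₁ ≤ ‖Ωx‖₁} for Ω ∈ R^{p×d} and x ∈ R^d with Ωx ≠ 0, and let g ∈ R^d be a standard Gaussian vector. Then the Gaussian width satisfies ℓ(T(x) ∩ S^{d−1})² ≤ inf_{t ≥ 0} E[dist(g, t·∂‖Ω·‖₁(x))²]. -/

import Mathlib

open MeasureTheory ProbabilityTheory Real Finset Pointwise
noncomputable section
/-- Euclidean inner product. -/
def ip {ι : Type*} [Fintype ι] (u v : ι → ℝ) : ℝ := ∑ i, u i * v i
/-- ℓ1 norm. -/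
def l1 {ι : Type*} [Fintype ι] (v : ι → ℝ) : ℝ := ∑ i, |v i|
/-- Euclidean (ℓ2) norm. -/
def l2 {ι : Type*} [Fintype ι] (v : ι → ℝ) : ℝ := Real.sqrt (∑ i, v i ^ 2)
/-- Standard Gaussian measure on ι → ℝ. -/
def stdGaussian (ι : Type*) [Fintype ι] : Measure (ι → ℝ) :=
  Measure.pi fun _ => gaussianReal 0 1
/-- Matrix-vector product, matrix given by its rows. -/
def amul {ι κ : Type*} [Fintype ι] [Fintype κ] (Ω : ι → κ → ℝ) (z : κ → ℝ) : ι → ℝ :=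
  fun i => ip (Ω i) z
/-- Transposed matrix-vector product. -/
def atmul {ι κ : Type*} [Fintype ι] [Fintype κ] (Ω : ι → κ → ℝ) (α : ι → ℝ) : κ → ℝ :=
  fun j => ∑ i, α i * Ω i j
/-- Gaussian width of a set. -/
def gaussWidth {ι : Type*} [Fintype ι] (S : Set (ι → ℝ)) : ℝ :=
  ∫ g, sSup ((fun w => ip g w) '' S) ∂stdGaussian ι
/-- Euclidean distance from a point to a set. -/
def distTo {ι : Type*} [Fintype ι] (g : ι → ℝ) (S : Set (ι → ℝ)) : ℝ :=
  sInf ((fun u => l2 (g - u)) '' S)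
/-- max of ‖Ωz‖₁ over the Euclidean unit ball. -/
def maxL1 {ι κ : Type*} [Fintype ι] [Fintype κ] (Ω : ι → κ → ℝ) : ℝ :=
  sSup ((fun z => l1 (amul Ω z)) '' {z | l2 z ≤ 1})
/-- Subdifferential of f at x. -/
def subdiffAt {ι : Type*} [Fintype ι] (f : (ι → ℝ) → ℝ) (x : ι → ℝ) : Set (ι → ℝ) :=
  {v | ∀ z, f x + ip (z - x) v ≤ f z}
/-- Tangent (descent) cone of ‖Ω·‖₁ at x. -/
def tangentCone {ι κ : Type*} [Fintype ι] [Fintype κ] (Ω : ι → κ → ℝ) (x : κ → ℝ) :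
    Set (κ → ℝ) :=
  {v | ∃ (t : ℝ) (z : κ → ℝ), 0 ≤ t ∧ l1 (amul Ω z) ≤ l1 (amul Ω x) ∧ v = t • (z - x)}

/-! ### Auxiliary lemmas -/

section Aux

variable {ι : Type*} [Fintype ι]

lemma l2_nonneg (v : ι → ℝ) : 0 ≤ l2 v := Real.sqrt_nonneg _

lemma l2_sq (v : ι → ℝ) : l2 v ^ 2 = ∑ i, v i ^ 2 := Real.sq_sqrt (by positivity)

lemma ip_le (u v : ι → ℝ) : ip u v ≤ l2 u * l2 v := Real.sum_mul_le_sqrt_mul_sqrt _ _ _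

lemma l2_neg (v : ι → ℝ) : l2 (-v) = l2 v := by simp [l2]

lemma ip_neg_left (u v : ι → ℝ) : ip (-u) v = - ip u v := by simp [ip]

lemma neg_l2_le_ip (u v : ι → ℝ) : -(l2 u * l2 v) ≤ ip u v := by
  have h := ip_le (-u) v
  rw [ip_neg_left, l2_neg] at h
  linarith

lemma ip_sub_left (u w v : ι → ℝ) : ip (u - w) v = ip u v - ip w v := by
  simp [ip, sub_mul, Finset.sum_sub_distrib]

lemma ip_smul_left (t : ℝ) (u v : ι → ℝ) : ip (t • u) v = t * ip u v := by
  simp [ip, Finset.mul_sum, mul_assoc]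

lemma ip_comm (u v : ι → ℝ) : ip u v = ip v u := by simp [ip, mul_comm]

lemma ip_smul_right (t : ℝ) (u v : ι → ℝ) : ip u (t • v) = t * ip u v := by
  rw [ip_comm, ip_smul_left, ip_comm]

lemma l2_add_le (u v : ι → ℝ) : l2 (u + v) ≤ l2 u + l2 v := by
  have hsq : l2 (u + v) ^ 2 ≤ (l2 u + l2 v) ^ 2 := by
    rw [l2_sq]
    have e : ∑ i, (u + v) i ^ 2 = (∑ i, u i ^ 2) + 2 * ip u v + ∑ i, v i ^ 2 := by
      rw [show (∑ i, u i ^ 2) + 2 * ip u v + ∑ i, v i ^ 2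
          = ∑ i, (u i ^ 2 + 2 * (u i * v i) + v i ^ 2) by
        simp [ip, Finset.sum_add_distrib, Finset.mul_sum]]
      exact Finset.sum_congr rfl fun i _ => by simp [Pi.add_apply]; ring
    rw [e]
    nlinarith [ip_le u v, l2_sq u, l2_sq v, l2_nonneg u, l2_nonneg v]
  calc l2 (u + v) = √(l2 (u + v) ^ 2) := (Real.sqrt_sq (l2_nonneg _)).symm
    _ ≤ √((l2 u + l2 v) ^ 2) := Real.sqrt_le_sqrt hsq
    _ = l2 u + l2 v := Real.sqrt_sq (add_nonneg (l2_nonneg u) (l2_nonneg v))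

lemma l2_sub_le (a b c : ι → ℝ) : l2 (a - c) ≤ l2 (a - b) + l2 (b - c) := by
  have h := l2_add_le (a - b) (b - c)
  rwa [sub_add_sub_cancel] at h

lemma l2_le_dist {d : ℕ} (a b : Fin d → ℝ) : l2 (a - b) ≤ √d * dist a b := by
  have h1 : ∑ i, (a - b) i ^ 2 ≤ ∑ _i : Fin d, dist a b ^ 2 := by
    refine Finset.sum_le_sum fun i _ => ?_
    have h2 : |(a - b) i| ≤ dist a b := by
      rw [Pi.sub_apply, ← Real.dist_eq]
      exact dist_le_pi_dist a b i
    calc (a - b) i ^ 2 = |(a - b) i| ^ 2 := (sq_abs _).symm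
      _ ≤ dist a b ^ 2 := by gcongr
  calc l2 (a - b) ≤ √(∑ _i : Fin d, dist a b ^ 2) := Real.sqrt_le_sqrt h1
    _ = √(d * dist a b ^ 2) := by simp [Finset.sum_const, Finset.card_univ, mul_comm]
    _ = √d * dist a b := by
        rw [Real.sqrt_mul (by positivity), Real.sqrt_sq dist_nonneg]

lemma continuous_l2 {d : ℕ} : Continuous (fun g : Fin d → ℝ => l2 g) := by
  unfold l2; fun_prop

instance (ι : Type*) [Fintype ι] : IsProbabilityMeasure (stdGaussian ι) := by
  unfold _root_.stdGaussian; infer_instance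

lemma stdGaussian_map_eval (i : ι) :
    (stdGaussian ι).map (fun g => g i) = gaussianReal 0 1 := by
  classical
  ext s hs
  rw [Measure.map_apply (measurable_pi_apply i) hs, _root_.stdGaussian]
  have h1 : (fun g : ι → ℝ => g i) ⁻¹' s
      = Set.pi Set.univ (Function.update (fun _ => Set.univ) i s) := Set.eval_preimage
  rw [h1, Measure.pi_pi]
  rw [Fintype.prod_eq_single i (fun j hj => by
    rw [Function.update_of_ne hj]; exact measure_univ)]
  rw [Function.update_self]

lemma integrable_sq_gaussianReal' : Integrable (fun x : ℝ => x ^ 2) (gaussianReal 0 1) := by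
  rw [gaussianReal_of_var_ne_zero 0 one_ne_zero]
  rw [integrable_withDensity_iff (measurable_gaussianPDF 0 1)
    (ae_of_all _ fun x => ENNReal.ofReal_lt_top)]
  have base : Integrable (fun x : ℝ => x ^ (2:ℝ) * rexp (-(2⁻¹) * x ^ 2)) :=
    integrable_rpow_mul_exp_neg_mul_sq (by norm_num) (by norm_num)
  have base2 : Integrable (fun x : ℝ => (√(2 * π))⁻¹ * (x ^ (2:ℝ) * rexp (-(2⁻¹) * x ^ 2))) :=
    base.const_mul _
  refine base2.congr (ae_of_all _ fun x => ?_)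
  show (√(2 * π))⁻¹ * (x ^ (2:ℝ) * rexp (-(2⁻¹) * x ^ 2)) = x ^ 2 * (gaussianPDF 0 1 x).toReal
  have hx : x ^ (2:ℝ) = x ^ (2:ℕ) := by
    rw [show ((2:ℝ) = ((2:ℕ):ℝ)) by norm_num, Real.rpow_natCast]
  simp only [gaussianPDF, gaussianPDFReal, NNReal.coe_one]
  rw [ENNReal.toReal_ofReal (by positivity), hx]
  ring_nf

lemma memℒp_id_gaussianReal : MemLp (fun x : ℝ => x) 2 (gaussianReal 0 1) := by
  rw [memLp_two_iff_integrable_sq (f := fun x : ℝ => x) measurable_id.aestronglyMeasurable]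
  exact integrable_sq_gaussianReal'

lemma integrable_id_gaussianReal : Integrable (fun x : ℝ => x) (gaussianReal 0 1) :=
  memℒp_id_gaussianReal.integrable one_le_two

lemma integral_id_gaussianReal : ∫ x, x ∂gaussianReal 0 1 = 0 := by
  have hmap : (gaussianReal 0 1).map (fun x => (-1 : ℝ) * x) = gaussianReal 0 1 := by
    have h := gaussianReal_map_const_mul (μ := (0:ℝ)) (v := (1:NNReal)) (-1)
    have h2 : (⟨(-1 : ℝ) ^ 2, sq_nonneg _⟩ : NNReal) = 1 := by ext; norm_num
    simpa [h2] using h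
  have h2 : ∫ x, x ∂gaussianReal 0 1 = ∫ x, (-1 : ℝ) * x ∂gaussianReal 0 1 := by
    conv_lhs => rw [← hmap]
    rw [integral_map (f := fun y : ℝ => y)
      ((by fun_prop : Measurable fun x : ℝ => (-1:ℝ) * x).aemeasurable)
      measurable_id.aestronglyMeasurable]
  rw [integral_const_mul] at h2
  linarith

lemma integrable_eval_sq (i : ι) :
    Integrable (fun g : ι → ℝ => g i ^ 2) (stdGaussian ι) := by
  have h := stdGaussian_map_eval (ι := ι) i
  exact (integrable_map_measure ((measurable_id.pow_const 2).aestronglyMeasurable)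
    (measurable_pi_apply i).aemeasurable).mp (by rw [h]; exact integrable_sq_gaussianReal')

lemma integrable_eval (i : ι) :
    Integrable (fun g : ι → ℝ => g i) (stdGaussian ι) := by
  have h := stdGaussian_map_eval (ι := ι) i
  exact (integrable_map_measure measurable_id.aestronglyMeasurable
    (measurable_pi_apply i).aemeasurable).mp (by rw [h]; exact integrable_id_gaussianReal)

lemma integral_eval (i : ι) : ∫ g : ι → ℝ, g i ∂stdGaussian ι = 0 := by
  have h := stdGaussian_map_eval (ι := ι) i
  have e : (∫ x, x ∂gaussianReal 0 1) = ∫ g : ι → ℝ, g i ∂stdGaussian ι := by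
    rw [← h, integral_map (φ := fun g : ι → ℝ => g i) (f := fun y : ℝ => y)
      (measurable_pi_apply i).aemeasurable
      ((measurable_id : Measurable fun y : ℝ => y).aestronglyMeasurable)]
  rw [← e]
  exact _root_.integral_id_gaussianReal

lemma memℒp_l2 {d : ℕ} : MemLp (fun g : Fin d → ℝ => l2 g) 2 (stdGaussian (Fin d)) := by
  rw [memLp_two_iff_integrable_sq continuous_l2.measurable.aestronglyMeasurable]
  simp only [l2_sq]
  exact integrable_finset_sum _ fun i _ => integrable_eval_sq i

lemma subgrad_exists {p d : ℕ} (Ω : Fin p → Fin d → ℝ) (x : Fin d → ℝ) :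
    (subdiffAt (fun z => l1 (amul Ω z)) x).Nonempty := by
  classical
  set s : Fin p → ℝ := fun i => if amul Ω x i < 0 then -1 else 1 with hs
  refine ⟨atmul Ω s, fun z => ?_⟩
  have key : ip (z - x) (atmul Ω s) = ∑ i, s i * (amul Ω z i - amul Ω x i) := by
    simp only [ip, atmul, amul, Finset.mul_sum]
    rw [Finset.sum_comm]
    refine Finset.sum_congr rfl fun i _ => ?_
    rw [← Finset.sum_sub_distrib, Finset.mul_sum]
    refine Finset.sum_congr rfl fun j _ => ?_
    simp only [Pi.sub_apply]; ring
  show l1 (amul Ω x) + ip (z - x) (atmul Ω s) ≤ l1 (amul Ω z)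
  rw [key]
  simp only [l1]
  rw [← Finset.sum_add_distrib]
  refine Finset.sum_le_sum fun i _ => ?_
  have h1 : s i * amul Ω x i = |amul Ω x i| := by
    simp only [hs]
    by_cases hneg : amul Ω x i < 0
    · simp [hneg, abs_of_neg hneg]
    · simp [hneg, abs_of_nonneg (not_lt.mp hneg)]
  have h2 : s i * amul Ω z i ≤ |amul Ω z i| := by
    simp only [hs]
    by_cases hneg : amul Ω x i < 0
    · simp only [if_pos hneg]; rw [neg_one_mul]; exact neg_le_abs _
    · simp only [if_neg hneg, one_mul]; exact le_abs_self _
  rw [mul_sub]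
  linarith

end Aux

theorem gauss_width_tangent_cone_le_dist (p d : ℕ) (Ω : Fin p → Fin d → ℝ)
    (x : Fin d → ℝ) (hx : amul Ω x ≠ 0) :
    gaussWidth (tangentCone Ω x ∩ {v | l2 v = 1}) ^ 2 ≤
      sInf {r | ∃ t : ℝ, 0 ≤ t ∧
        r = ∫ g, (distTo g (t • subdiffAt (fun z => l1 (amul Ω z)) x)) ^ 2
              ∂stdGaussian (Fin d)} := by
  classical
  set γ := stdGaussian (Fin d) with hγ
  set f : (Fin d → ℝ) → ℝ := fun z => l1 (amul Ω z) with hf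
  set W := subdiffAt f x with hWdef
  obtain ⟨w₀, hw₀⟩ := subgrad_exists Ω x
  have hw₀' : w₀ ∈ W := hw₀
  set S := tangentCone Ω x ∩ {v | l2 v = 1} with hSdef
  refine le_csInf ⟨_, 0, le_refl 0, rfl⟩ ?_
  rintro r ⟨t, ht, rfl⟩
  set K := t • W with hKdef
  set D := fun g : Fin d → ℝ => distTo g K with hDdef
  have hKne : K.Nonempty := ⟨t • w₀, Set.smul_mem_smul_set hw₀'⟩
  obtain ⟨u₀, hu₀⟩ := hKne
  have hKne : K.Nonempty := ⟨u₀, hu₀⟩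
  have hbddK : ∀ g : Fin d → ℝ, BddBelow ((fun u => l2 (g - u)) '' K) := fun g =>
    ⟨0, by rintro y ⟨u, hu, rfl⟩; exact l2_nonneg _⟩
  have hDnn : ∀ g, 0 ≤ D g := fun g =>
    Real.sInf_nonneg (by rintro y ⟨u, hu, rfl⟩; exact l2_nonneg _)
  -- key pointwise inequality
  have hkey : ∀ (g v : Fin d → ℝ), v ∈ S → ∀ u ∈ K, ip g v ≤ l2 (g - u) := by
    rintro g v ⟨⟨s', z, hs', hz, rfl⟩, hv1⟩ u hu
    obtain ⟨w, hw, rfl⟩ := Set.mem_smul_set.mp hu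
    have hv1' : l2 (s' • (z - x)) = 1 := hv1
    have hwz : f x + ip (z - x) w ≤ f z := hw z
    have hzx : f z ≤ f x := hz
    have hsub : ip (z - x) w ≤ 0 := by linarith
    have e2 : ip (t • w) (s' • (z - x)) ≤ 0 := by
      rw [ip_smul_left, ip_smul_right, ip_comm w (z - x)]
      have hts : 0 ≤ t * s' := mul_nonneg ht hs'
      nlinarith
    have e3 : ip (g - t • w) (s' • (z - x)) ≤ l2 (g - t • w) := by
      have hcs := ip_le (g - t • w) (s' • (z - x))
      rw [hv1', mul_one] at hcs
      exact hcs
    have e1 := ip_sub_left g (t • w) (s' • (z - x))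
    linarith
  rcases Set.eq_empty_or_nonempty S with hSe | hSne
  · -- empty intersection: Gaussian width is zero
    have hzero : gaussWidth S = 0 := by
      simp [gaussWidth, hSe, Real.sSup_empty]
    rw [hzero]
    simpa using integral_nonneg (μ := γ) (fun g => sq_nonneg (distTo g K))
  · obtain ⟨v₀, hv₀⟩ := hSne
    have hSne : S.Nonempty := ⟨v₀, hv₀⟩
    have hv₀1 : l2 v₀ = 1 := hv₀.2
    set h : (Fin d → ℝ) → ℝ := fun g => sSup ((fun w => ip g w) '' S) with hhdef
    have hBdd : ∀ g : Fin d → ℝ, ∀ y ∈ (fun w => ip g w) '' S, y ≤ l2 g := by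
      rintro g y ⟨v, hv, rfl⟩
      have hle := ip_le g v
      rw [show l2 v = 1 from hv.2, mul_one] at hle
      exact hle
    have hhub : ∀ g, h g ≤ l2 g := fun g => csSup_le (hSne.image _) (hBdd g)
    have hhlb : ∀ g, -l2 g ≤ h g := by
      intro g
      have h1 : ip g v₀ ≤ h g := le_csSup ⟨l2 g, fun y hy => hBdd g y hy⟩ ⟨v₀, hv₀, rfl⟩
      have h2 := neg_l2_le_ip g v₀
      rw [hv₀1, mul_one] at h2
      linarith
    have hhD : ∀ g, h g ≤ D g := by
      intro g
      refine le_csInf (hKne.image _) ?_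
      rintro y ⟨u, hu, rfl⟩
      exact csSup_le (hSne.image _) (by rintro y' ⟨v, hv, rfl⟩; exact hkey g v hv u hu)
    have hlip : ∀ a b : Fin d → ℝ, h a ≤ h b + l2 (a - b) := by
      intro a b
      refine csSup_le (hSne.image _) ?_
      rintro y ⟨v, hv, rfl⟩
      have h1 : ip b v ≤ h b := le_csSup ⟨l2 b, hBdd b⟩ ⟨v, hv, rfl⟩
      have h2 : ip (a - b) v ≤ l2 (a - b) := by
        have hle := ip_le (a - b) v
        rw [show l2 v = 1 from hv.2, mul_one] at hle
        exact hle
      have h3 := ip_sub_left a b v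
      linarith
    have hhcont : Continuous h := by
      refine (LipschitzWith.of_dist_le_mul (K := ⟨√d, Real.sqrt_nonneg _⟩) ?_).continuous
      intro a b
      simp only [NNReal.coe_mk, Real.dist_eq]
      change |h a - h b| ≤ √(d:ℝ) * dist a b
      rw [abs_sub_le_iff]
      constructor
      · have := hlip a b; have := l2_le_dist a b; linarith
      · have := hlip b a; have h2 := l2_le_dist b a
        rw [dist_comm b a] at h2; linarith
    have hlipD : ∀ a b : Fin d → ℝ, D a ≤ D b + l2 (a - b) := by
      intro a b
      have hstep : ∀ u ∈ K, D a - l2 (a - b) ≤ l2 (b - u) := by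
        intro u hu
        have h1 : D a ≤ l2 (a - u) := csInf_le (hbddK a) ⟨u, hu, rfl⟩
        have h2 := l2_sub_le a b u
        linarith
      have h4 : D a - l2 (a - b) ≤ D b :=
        le_csInf (hKne.image _) (by rintro y ⟨u, hu, rfl⟩; exact hstep u hu)
      linarith
    have hDcont : Continuous D := by
      refine (LipschitzWith.of_dist_le_mul (K := ⟨√d, Real.sqrt_nonneg _⟩) ?_).continuous
      intro a b
      simp only [NNReal.coe_mk, Real.dist_eq]
      change |D a - D b| ≤ √(d:ℝ) * dist a b
      rw [abs_sub_le_iff]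
      constructor
      · have := hlipD a b; have := l2_le_dist a b; linarith
      · have := hlipD b a; have h2 := l2_le_dist b a
        rw [dist_comm b a] at h2; linarith
    haveI : IsProbabilityMeasure γ := by rw [hγ]; infer_instance
    have hl2mem : MemLp (fun g : Fin d → ℝ => l2 g) 2 γ := memℒp_l2
    have hl2int : Integrable (fun g : Fin d → ℝ => l2 g) γ := hl2mem.integrable one_le_two
    have hhint : Integrable h γ := by
      refine Integrable.mono' hl2int hhcont.aestronglyMeasurable (ae_of_all _ fun g => ?_)
      rw [Real.norm_eq_abs, abs_le]
      exact ⟨hhlb g, hhub g⟩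
    have hDle : ∀ g, D g ≤ l2 g + l2 u₀ := by
      intro g
      have h1 : D g ≤ l2 (g - u₀) := csInf_le (hbddK g) ⟨u₀, hu₀, rfl⟩
      have h2 : l2 (g - u₀) ≤ l2 g + l2 u₀ := by
        have h3 := l2_add_le g (-u₀)
        rw [l2_neg] at h3
        simpa [sub_eq_add_neg] using h3
      linarith
    have hDmem : MemLp D 2 γ := by
      refine MemLp.of_le (hl2mem.add (memLp_const (l2 u₀)))
        hDcont.aestronglyMeasurable (ae_of_all _ fun g => ?_)
      simp only [Pi.add_apply, Real.norm_eq_abs]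
      rw [abs_of_nonneg (hDnn g),
        abs_of_nonneg (add_nonneg (l2_nonneg g) (l2_nonneg u₀))]
      exact hDle g
    have hDint : Integrable D γ := hDmem.integrable one_le_two
    have hD2int : Integrable (fun g => D g ^ 2) γ :=
      (memLp_two_iff_integrable_sq hDcont.measurable.aestronglyMeasurable).mp hDmem
    have hipint : Integrable (fun g : Fin d → ℝ => ip g v₀) γ := by
      simp only [ip]
      exact integrable_finset_sum _ fun i _ => (integrable_eval i).mul_const _
    have hipzero : ∫ g, ip g v₀ ∂γ = 0 := by
      simp only [ip]
      rw [integral_finset_sum _ (fun i _ => (integrable_eval i).mul_const _)]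
      refine Finset.sum_eq_zero fun i _ => ?_
      rw [integral_mul_const, integral_eval i, zero_mul]
    have hint1 : 0 ≤ ∫ g, h g ∂γ := by
      rw [← hipzero]
      refine integral_mono hipint hhint fun g => ?_
      exact le_csSup ⟨l2 g, hBdd g⟩ ⟨v₀, hv₀, rfl⟩
    have hint2 : ∫ g, h g ∂γ ≤ ∫ g, D g ∂γ := integral_mono hhint hDint hhD
    have hvar : (∫ g, D g ∂γ) ^ 2 ≤ ∫ g, D g ^ 2 ∂γ := by
      have h1 := variance_nonneg D γ
      rw [variance_eq_sub hDmem] at h1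
      simp only [Pi.pow_apply] at h1
      linarith
    have hgw : gaussWidth S = ∫ g, h g ∂γ := rfl
    calc gaussWidth S ^ 2 = (∫ g, h g ∂γ) ^ 2 := by rw [hgw]
      _ ≤ (∫ g, D g ∂γ) ^ 2 := pow_le_pow_left₀ hint1 hint2 2
      _ ≤ ∫ g, D g ^ 2 ∂γ := hvar
      _ = ∫ g, distTo g K ^ 2 ∂γ := by simp only [hDdef]

end
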